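/- arXiv:1404.6688 — 2 statements merged into one kernel-verified Lean document; each statement's English description precedes it below -/
import Mathlib

section
/- Let U : ℝ → ℝ be concave, non-decreasing, and differentiable on [0, D] with U'(0) = b. Let V > 0, Q ≥ 0, and let x* maximize V·U(x) − x² − 2Qx over x ∈ [0, D]. If Q ≤ bV/2, then x* ≤ min{bV/2 − Q, D}; and in particular Q + x* ≤ bV/2. -/
open Set

/-- Slope bound for a concave function from the derivative at the left endpoint. -/
lemma stmt_6_slope_bound (U U' : ℝ → ℝ) (D b : ℝ)
    (hconc : ConcaveOn ℝ (Set.Icc 0 D) U)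
    (hderiv : ∀ x ∈ Set.Icc 0 D, HasDerivWithinAt U (U' x) (Set.Icc 0 D) x)
    (hb : U' 0 = b) {y x : ℝ} (hy : y ∈ Set.Icc 0 D) (hx : x ∈ Set.Icc 0 D)
    (hyx : y < x) : U x - U y ≤ b * (x - y) := by
  have h0 : (0 : ℝ) ∈ Set.Icc 0 D := ⟨le_refl 0, hy.1.trans (hyx.le.trans hx.2)⟩
  have hcv : ConvexOn ℝ (Set.Icc 0 D) (fun t => -U t) := hconc.neg
  -- slope of -U from 0 to x is ≥ -(U' 0) = -b
  have h1 : -b ≤ slope (fun t => -U t) 0 x := by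
    have := hcv.le_slope_of_hasDerivWithinAt h0 hx (hy.1.trans_lt hyx)
      ((hderiv 0 h0).neg)
    simpa [hb] using this
  have h1' : slope U 0 x ≤ b := by
    rw [slope_neg] at h1; linarith
  -- slope from y to x ≤ slope from 0 to x (antitone in left endpoint, base x)
  have h2 : slope U x y ≤ slope U x 0 := by
    rcases eq_or_lt_of_le hy.1 with h | h
    · simp [← h]
    · exact hconc.slope_anti hx ⟨h0, (hy.1.trans_lt hyx).ne⟩ ⟨hy, hyx.ne⟩ hy.1
  rw [slope_comm U x y, slope_comm U x 0] at h2
  have h3 : slope U y x ≤ b := h2.trans h1'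
  rw [slope_def_field] at h3
  have hne : x - y > 0 := by linarith
  calc U x - U y = (U x - U y) / (x - y) * (x - y) := by field_simp
    _ ≤ b * (x - y) := by
        apply mul_le_mul_of_nonneg_right h3 hne.le

/-- Rate-control step: if `U` is concave, non-decreasing and differentiable on
`[0,D]` with `U'(0) = b`, `V > 0`, `0 ≤ Q ≤ bV/2`, and `x*` maximizes
`V·U(x) − x² − 2Qx` over `[0,D]`, then `x* ≤ min{bV/2 − Q, D}` and
`Q + x* ≤ bV/2`. -/
theorem stmt_6 (U U' : ℝ → ℝ) (D b V Q xstar : ℝ)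
    (hD : 0 ≤ D)
    (hconc : ConcaveOn ℝ (Set.Icc 0 D) U)
    (hmono : MonotoneOn U (Set.Icc 0 D))
    (hderiv : ∀ x ∈ Set.Icc 0 D, HasDerivWithinAt U (U' x) (Set.Icc 0 D) x)
    (hb : U' 0 = b)
    (hV : 0 < V) (hQ : 0 ≤ Q)
    (hxstar : xstar ∈ Set.Icc 0 D)
    (hopt : ∀ x ∈ Set.Icc 0 D,
      V * U x - x ^ 2 - 2 * Q * x ≤ V * U xstar - xstar ^ 2 - 2 * Q * xstar)
    (hQb : Q ≤ b * V / 2) :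
    xstar ≤ min (b * V / 2 - Q) D ∧ Q + xstar ≤ b * V / 2 := by
  set y := min (b * V / 2 - Q) D with hy_def
  have hy0 : 0 ≤ y := le_min (by linarith) hD
  have hyD : y ≤ D := min_le_right _ _
  have hymem : y ∈ Set.Icc 0 D := ⟨hy0, hyD⟩
  have hmain : xstar ≤ y := by
    by_contra h
    push_neg at h
    have hyval : y = b * V / 2 - Q := by
      rcases min_cases (b * V / 2 - Q) D with ⟨h1, _⟩ | ⟨h1, h2⟩
      · exact h1
      · exfalso; rw [hy_def, h1] at h; exact absurd hxstar.2 (not_le.mpr h)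
    have hslope := stmt_6_slope_bound U U' D b hconc hderiv hb hymem hxstar h
    have hopt' := hopt y hymem
    nlinarith [h, hV.le, mul_le_mul_of_nonneg_left hslope hV.le]
  refine ⟨hmain, ?_⟩
  have : xstar ≤ b * V / 2 - Q := hmain.trans (min_le_left _ _)
  linarith
end

section
/- Suppose for all t ≥ 0, E[Ψ_{t+1} − Ψ_t − V·u_t | F_t] ≤ B − V·u* + V·B₂·E[α_t | F_t], where Ψ_t ≥ 0, Ψ_0 = 0, u_t ∈ [0, Ū] a.s., α_t ∈ {0,1}, and limsup_{T→∞} E[(1/T) Σ_{t=0}^{T-1} α_t] ≤ 1/L. Then liminf_{T→∞} (1/T) Σ_{t=0}^{T-1} E[u_t] ≥ u* − B/V − B₂/L. -/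
open MeasureTheory Filter

/-!
Taking expectations turns the conditional drift bound into a deterministic one,
`EΨ_{t+1} − EΨ_t − V·Eu_t ≤ B − V·u* + V·B₂·Eα_t`. Summing it over `t < T`, the left side
telescopes and `EΨ_T ≥ 0 = EΨ_0`, so after dividing by `V·T` the time average of `Eu_t` is at
least `u* − B/V − B₂·(average of Eα_t)`; passing to the liminf, the limsup bound `1/L` on the
average of `Eα_t` gives the claim.
-/

section Limits

variable {ι : Type*} {l : Filter ι} [NeBot l] {f g : ι → ℝ} {c k ℓ : ℝ}

theorem le_liminf_of_eventually_sub_mul_le (hk : 0 < k)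
    (hg : IsBoundedUnder (· ≤ ·) l g) (hf : IsBoundedUnder (· ≤ ·) l f)
    (hgℓ : limsup g l ≤ ℓ) (h : ∀ᶠ i in l, c - k * g i ≤ f i) :
    c - k * ℓ ≤ liminf f l := by
  refine le_of_forall_pos_le_add fun ε hε => ?_
  have hg_lt : ∀ᶠ i in l, g i < ℓ + ε / k :=
    eventually_lt_of_limsup_lt (by linarith [div_pos hε hk]) hg
  have hf_ge : ∀ᶠ i in l, c - k * ℓ - ε ≤ f i := by
    filter_upwards [h, hg_lt] with i hi hgi
    have : k * g i ≤ k * ℓ + ε := by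
      calc k * g i ≤ k * (ℓ + ε / k) := by gcongr
        _ = k * ℓ + ε := by rw [mul_add, mul_div_cancel₀ ε hk.ne']
    linarith
  linarith [le_liminf_of_le hf.isCoboundedUnder_ge hf_ge]

end Limits

theorem sum_range_div_le_of_le {f : ℕ → ℝ} {M : ℝ} (hf : ∀ t, f t ≤ M) {T : ℕ} (hT : 0 < T) :
    (∑ t ∈ Finset.range T, f t) / T ≤ M := by
  have hT' : (0 : ℝ) < T := by exact_mod_cast hT
  rw [div_le_iff₀ hT']
  simpa [mul_comm] using Finset.sum_le_sum fun t (_ : t ∈ Finset.range T) => hf t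

theorem isBoundedUnder_le_cesaro {f : ℕ → ℝ} {M : ℝ} (hf : ∀ t, f t ≤ M) :
    IsBoundedUnder (· ≤ ·) atTop fun T : ℕ => (∑ t ∈ Finset.range T, f t) / T :=
  isBoundedUnder_of_eventually_le <|
    (eventually_gt_atTop 0).mono fun _ hT => sum_range_div_le_of_le hf hT

section DriftPlusPenalty

variable {p u a : ℕ → ℝ} {V B B₂ ustar : ℝ}

theorem drift_sum_le
    (hdrift : ∀ t, p (t + 1) - p t - V * u t ≤ B - V * ustar + V * B₂ * a t) (T : ℕ) :
    p T - p 0 - V * ∑ t ∈ Finset.range T, u t ≤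
      T * (B - V * ustar) + V * B₂ * ∑ t ∈ Finset.range T, a t := by
  have h := Finset.sum_le_sum fun t (_ : t ∈ Finset.range T) => hdrift t
  rw [Finset.sum_sub_distrib, Finset.sum_range_sub, ← Finset.mul_sum, Finset.sum_add_distrib,
    ← Finset.mul_sum, Finset.sum_const, Finset.card_range, nsmul_eq_mul] at h
  linarith

theorem le_cesaro_of_drift (hV : 0 < V) (hp0 : p 0 = 0) (hp : ∀ t, 0 ≤ p t)
    (hdrift : ∀ t, p (t + 1) - p t - V * u t ≤ B - V * ustar + V * B₂ * a t)
    {T : ℕ} (hT : 0 < T) :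
    ustar - B / V - B₂ * ((∑ t ∈ Finset.range T, a t) / T) ≤
      (∑ t ∈ Finset.range T, u t) / T := by
  have hT' : (0 : ℝ) < T := by exact_mod_cast hT
  have h := drift_sum_le hdrift T
  rw [hp0] at h
  rw [le_div_iff₀ hT', ← mul_le_mul_iff_of_pos_left hV]
  have hexpand : V * ((ustar - B / V - B₂ * ((∑ t ∈ Finset.range T, a t) / T)) * T) =
      T * (V * ustar - B) - V * B₂ * ∑ t ∈ Finset.range T, a t := by
    field_simp
  linarith [hp T]

theorem le_liminf_cesaro_of_drift (hV : 0 < V) (hB₂ : 0 < B₂) (hp0 : p 0 = 0)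
    (hp : ∀ t, 0 ≤ p t)
    (hdrift : ∀ t, p (t + 1) - p t - V * u t ≤ B - V * ustar + V * B₂ * a t)
    {A Ubar ℓ : ℝ} (ha : ∀ t, a t ≤ A) (hu : ∀ t, u t ≤ Ubar)
    (hlimsup : limsup (fun T : ℕ => (∑ t ∈ Finset.range T, a t) / T) atTop ≤ ℓ) :
    ustar - B / V - B₂ * ℓ ≤
      liminf (fun T : ℕ => (∑ t ∈ Finset.range T, u t) / T) atTop :=
  le_liminf_of_eventually_sub_mul_le hB₂ (isBoundedUnder_le_cesaro ha)
    (isBoundedUnder_le_cesaro hu) hlimsup <|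
    (eventually_gt_atTop 0).mono fun _ hT => le_cesaro_of_drift hV hp0 hp hdrift hT

end DriftPlusPenalty

theorem integral_le_of_condExp_le_const_add_mul {Ω : Type*} {m m0 : MeasurableSpace Ω}
    {μ : Measure Ω} [IsProbabilityMeasure μ] (hm : m ≤ m0) {X Y : Ω → ℝ} {c k : ℝ}
    (h : ∀ᵐ ω ∂μ, μ[X | m] ω ≤ c + k * μ[Y | m] ω) :
    ∫ ω, X ω ∂μ ≤ c + k * ∫ ω, Y ω ∂μ :=
  calc ∫ ω, X ω ∂μ = ∫ ω, μ[X | m] ω ∂μ := (integral_condExp hm).symm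
    _ ≤ ∫ ω, c + k * μ[Y | m] ω ∂μ :=
      integral_mono_ae integrable_condExp
        ((integrable_const c).add (integrable_condExp.const_mul k)) h
    _ = c + k * ∫ ω, Y ω ∂μ := by
      rw [integral_add (integrable_const c) (integrable_condExp.const_mul k), integral_const,
        integral_const_mul, integral_condExp hm]
      simp

theorem stmt_19_general {Ω : Type*} {m0 : MeasurableSpace Ω} (μ : Measure Ω)
    [IsProbabilityMeasure μ]
    (ℱ : ℕ → MeasurableSpace Ω) (hℱ : ∀ t, ℱ t ≤ m0)
    (Ψ u α : ℕ → Ω → ℝ)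
    (V B B₂ ustar Ubar L : ℝ)
    (hV : 0 < V) (hB₂ : 0 < B₂)
    (hΨint : ∀ t, Integrable (Ψ t) μ)
    (huint : ∀ t, Integrable (u t) μ)
    (hαint : ∀ t, Integrable (α t) μ)
    (hΨnonneg : ∀ t ω, 0 ≤ Ψ t ω)
    (hΨ0 : ∀ ω, Ψ 0 ω = 0)
    (hu : ∀ t, ∀ᵐ ω ∂μ, u t ω ∈ Set.Icc 0 Ubar)
    (hα01 : ∀ t ω, α t ω = 0 ∨ α t ω = 1)
    (hdrift : ∀ t, ∀ᵐ ω ∂μ,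
      (μ[fun ω' => Ψ (t + 1) ω' - Ψ t ω' - V * u t ω' | ℱ t]) ω
        ≤ B - V * ustar + V * B₂ * (μ[α t | ℱ t]) ω)
    (hack : Filter.limsup
        (fun T : ℕ => ∫ ω, (∑ t ∈ Finset.range T, α t ω) / T ∂μ)
        Filter.atTop ≤ 1 / L) :
    ustar - B / V - B₂ / L ≤
      Filter.liminf (fun T : ℕ => (∑ t ∈ Finset.range T, ∫ ω, u t ω ∂μ) / T)
        Filter.atTop := by
  have hdrift_integral : ∀ t, ∫ ω, Ψ (t + 1) ω ∂μ - ∫ ω, Ψ t ω ∂μ - V * ∫ ω, u t ω ∂μ ≤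
      B - V * ustar + V * B₂ * ∫ ω, α t ω ∂μ := fun t => by
    have h := integral_le_of_condExp_le_const_add_mul (hℱ t) (hdrift t)
    have hΨ_diff : Integrable (fun ω => Ψ (t + 1) ω - Ψ t ω) μ := (hΨint _).sub (hΨint t)
    rwa [integral_sub hΨ_diff ((huint t).const_mul V),
      integral_sub (hΨint _) (hΨint t), integral_const_mul] at h
  have hα_le : ∀ t, ∫ ω, α t ω ∂μ ≤ 1 := fun t => by
    simpa using integral_mono (hαint t) (integrable_const 1)
      fun ω => by rcases hα01 t ω with h | h <;> simp [h]
  have hu_le : ∀ t, ∫ ω, u t ω ∂μ ≤ Ubar := fun t => by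
    simpa using integral_mono_ae (huint t) (integrable_const Ubar)
      ((hu t).mono fun _ hω => hω.2)
  rw [div_eq_mul_one_div B₂ L]
  refine le_liminf_cesaro_of_drift hV hB₂ (by simp [hΨ0])
    (fun t => integral_nonneg (hΨnonneg t)) hdrift_integral hα_le hu_le ?_
  simpa only [integral_div, integral_finsetSum _ fun t _ => hαint t] using hack

/-- Modified Lyapunov drift-plus-penalty bound: if the conditional drift
satisfies `E[Ψ_{t+1} − Ψ_t − V·u_t | F_t] ≤ B − V·u* + V·B₂·E[α_t | F_t]`
with `Ψ ≥ 0`, `Ψ_0 = 0`, `u_t ∈ [0, Ū]`, `α_t ∈ {0,1}`, and the ACK fraction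
satisfies `limsup E[(1/T) Σ α_t] ≤ 1/L`, then
`liminf (1/T) Σ E[u_t] ≥ u* − B/V − B₂/L`. -/
theorem stmt_19 {Ω : Type*} {m0 : MeasurableSpace Ω} (μ : Measure Ω)
    [IsProbabilityMeasure μ]
    (ℱ : ℕ → MeasurableSpace Ω) (hℱ : ∀ t, ℱ t ≤ m0)
    (Ψ u α : ℕ → Ω → ℝ)
    (V B B₂ ustar Ubar L : ℝ)
    (hV : 0 < V) (hB : 0 < B) (hB₂ : 0 < B₂) (hL : 1 ≤ L) (hUbar : 0 ≤ Ubar)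
    (hΨint : ∀ t, Integrable (Ψ t) μ)
    (huint : ∀ t, Integrable (u t) μ)
    (hαint : ∀ t, Integrable (α t) μ)
    (hΨnonneg : ∀ t ω, 0 ≤ Ψ t ω)
    (hΨ0 : ∀ ω, Ψ 0 ω = 0)
    (hu : ∀ t, ∀ᵐ ω ∂μ, u t ω ∈ Set.Icc 0 Ubar)
    (hα01 : ∀ t ω, α t ω = 0 ∨ α t ω = 1)
    (hdrift : ∀ t, ∀ᵐ ω ∂μ,
      (μ[fun ω' => Ψ (t + 1) ω' - Ψ t ω' - V * u t ω' | ℱ t]) ω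
        ≤ B - V * ustar + V * B₂ * (μ[α t | ℱ t]) ω)
    (hack : Filter.limsup
        (fun T : ℕ => ∫ ω, (∑ t ∈ Finset.range T, α t ω) / T ∂μ)
        Filter.atTop ≤ 1 / L) :
    ustar - B / V - B₂ / L ≤
      Filter.liminf (fun T : ℕ => (∑ t ∈ Finset.range T, ∫ ω, u t ω ∂μ) / T)
        Filter.atTop :=
  stmt_19_general μ ℱ hℱ Ψ u α V B B₂ ustar Ubar L hV hB₂ hΨint huint hαint hΨnonneg hΨ0 hu hα01
    hdrift hack
end
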